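/- arXiv:2209.14530 — 4 statements merged into one kernel-verified Lean document; each statement's English description precedes it below -/
import Mathlib

section
/- For every n-qubit pure state ψ, the stabilizer extent is at least the inverse of the stabilizer fidelity: ξ(ψ) · F_𝒮(ψ) ≥ 1. -/
open scoped BigOperators
open Finset

noncomputable section

/-- Length-`n` bit strings, i.e. `𝔽₂ⁿ`. -/
abbrev BV (n : ℕ) := Fin n → ZMod 2

/-- Integer-valued inner product: number of coordinates where both strings are 1. -/
def bdot {n : ℕ} (p q : BV n) : ℕ :=
  (Finset.univ.filter (fun i => p i = 1 ∧ q i = 1)).card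

/-- The Weyl operator `W_x` for `x = (p, q) ∈ 𝔽₂^{2n}`:
`W_x |b⟩ = i^{p·q} (−1)^{q·b} |b ⊕ p⟩`. -/
def Weyl {n : ℕ} (x : BV n × BV n) : Matrix (BV n) (BV n) ℂ :=
  Matrix.of fun r c => if r = c + x.1 then Complex.I ^ bdot x.1 x.2 * (-1 : ℂ) ^ bdot x.2 c else 0

/-- `⟨ψ|W_x|ψ⟩`. -/
def weylExp {n : ℕ} (ψ : BV n → ℂ) (x : BV n × BV n) : ℂ :=
  ∑ r : BV n, (starRingEnd ℂ) (ψ r) * ((Weyl x).mulVec ψ r)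

/-- `ψ` is an `n`-qubit pure state, i.e. a unit vector in `ℂ^{2ⁿ}`. -/
def IsState {n : ℕ} (ψ : BV n → ℂ) : Prop :=
  ∑ b : BV n, ‖ψ b‖ ^ 2 = 1

/-- The characteristic distribution `p_ψ(x) = 2^{−n} |⟨ψ|W_x|ψ⟩|²`. -/
def charDist {n : ℕ} (ψ : BV n → ℂ) (x : BV n × BV n) : ℝ :=
  (2 ^ n : ℝ)⁻¹ * ‖weylExp ψ x‖ ^ 2

/-- The Weyl distribution `q_ψ(x) = Σ_y p_ψ(y) p_ψ(x ⊕ y)`. -/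
def weylDist {n : ℕ} (ψ : BV n → ℂ) (x : BV n × BV n) : ℝ :=
  ∑ y : BV n × BV n, charDist ψ y * charDist ψ (x + y)

/-- Fourier coefficient `f̂(s) = 4^{−n} Σ_x f(x) (−1)^{x·s}` for `f : 𝔽₂^{2n} → ℝ`. -/
def booleanFourier {n : ℕ} (f : BV n × BV n → ℝ) (s : BV n × BV n) : ℝ :=
  (4 ^ n : ℝ)⁻¹ * ∑ x : BV n × BV n, f x * (-1 : ℝ) ^ (bdot x.1 s.1 + bdot x.2 s.2)

/-- The Hadamard gate on qubit `j`. -/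
def Hgate {n : ℕ} (j : Fin n) : Matrix (BV n) (BV n) ℂ :=
  Matrix.of fun r c =>
    if ∀ i, i ≠ j → r i = c i then
      (((Real.sqrt 2 : ℝ) : ℂ))⁻¹ * (-1 : ℂ) ^ ((r j).val * (c j).val)
    else 0

/-- The phase gate `S = diag(1, i)` on qubit `j`. -/
def Sgate {n : ℕ} (j : Fin n) : Matrix (BV n) (BV n) ℂ :=
  Matrix.of fun r c => if r = c then Complex.I ^ (r j).val else 0

/-- The CNOT gate with control qubit `j` and target qubit `k`. -/
def CNOTgate {n : ℕ} (j k : Fin n) : Matrix (BV n) (BV n) ℂ :=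
  Matrix.of fun r c => if r = Function.update c k (c k + c j) then 1 else 0

/-- The generators of the `n`-qubit Clifford group. -/
def cliffordGens (n : ℕ) : Set (Matrix (BV n) (BV n) ℂ) :=
  {M | (∃ j, M = Hgate j) ∨ (∃ j, M = Sgate j) ∨ (∃ j k, j ≠ k ∧ M = CNOTgate j k)}

/-- The `n`-qubit Clifford group `𝒞ₙ`: all finite products of the generators.
(Each generator has finite order, so this coincides with the generated group.) -/
def CliffordGroup (n : ℕ) : Submonoid (Matrix (BV n) (BV n) ℂ) :=
  Submonoid.closure (cliffordGens n)

/-- The all-zeros basis state `|0ⁿ⟩`. -/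
def e0 {n : ℕ} : BV n → ℂ := fun b => if b = 0 then 1 else 0

/-- The set of `n`-qubit stabilizer states `𝒮ₙ = {C|0ⁿ⟩ : C ∈ 𝒞ₙ}`. -/
def stabStates (n : ℕ) : Set (BV n → ℂ) :=
  {φ | ∃ C ∈ CliffordGroup n, φ = C.mulVec e0}

/-- The inner product `⟨φ|ψ⟩`. -/
def innerC {n : ℕ} (φ ψ : BV n → ℂ) : ℂ := ∑ b : BV n, (starRingEnd ℂ) (φ b) * ψ b

/-- The stabilizer fidelity `F_𝒮(ψ) = max_{φ ∈ 𝒮ₙ} |⟨φ|ψ⟩|²`. -/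
def stabFidelity {n : ℕ} (ψ : BV n → ℂ) : ℝ :=
  sSup {r | ∃ φ ∈ stabStates n, r = ‖innerC φ ψ‖ ^ 2}

/-- The stabilizer extent `ξ(ψ)`: the minimum of `(Σᵢ |cᵢ|)²` over all finite
decompositions `ψ = Σᵢ cᵢ φᵢ` with stabilizer states `φᵢ`. -/
def stabExtent {n : ℕ} (ψ : BV n → ℂ) : ℝ :=
  sInf {r | ∃ (m : ℕ) (c : Fin m → ℂ) (φ : Fin m → (BV n → ℂ)),
    (∀ i, φ i ∈ stabStates n) ∧ ψ = ∑ i, c i • φ i ∧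
    r = (∑ i, ‖c i‖) ^ 2}

/-- The T-gate `T = diag(1, e^{iπ/4})` on qubit `j`. -/
def Tgate {n : ℕ} (j : Fin n) : Matrix (BV n) (BV n) ℂ :=
  Matrix.of fun r c => if r = c then Complex.exp (Complex.I * Real.pi / 4) ^ (r j).val else 0

/-- The `m`-fold tensor power `|T⟩^{⊗m}` of `|T⟩ = (|0⟩ + e^{iπ/4}|1⟩)/√2`. -/
def TstateM (m : ℕ) : BV m → ℂ :=
  fun b => ∏ i : Fin m, ((((Real.sqrt 2 : ℝ) : ℂ))⁻¹ * Complex.exp (Complex.I * Real.pi / 4) ^ (b i).val)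

end

/-!
For any decomposition `ψ = ∑ cᵢ φᵢ` into stabilizer states,
`1 = ⟨ψ|ψ⟩ = ∑ c̄ᵢ ⟨φᵢ|ψ⟩ ≤ (∑ |cᵢ|) √F_𝒮(ψ)`, so `(∑ |cᵢ|)² F_𝒮(ψ) ≥ 1`.
Two facts keep `sSup` and `sInf` away from their junk values: Clifford matrices are unitary, so
stabilizer states are unit vectors and the fidelities are bounded by `1`; and every computational
basis state is a stabilizer state (`H S² H` is the bit flip `X`), so decompositions exist.
-/

open Matrix
open scoped InnerProductSpace

theorem one_le_csInf_mul {S : Set ℝ} (hS : S.Nonempty) {F : ℝ} (hF : 0 ≤ F)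
    (h : ∀ r ∈ S, 1 ≤ r * F) : 1 ≤ sInf S * F := by
  obtain ⟨r, hr⟩ := hS
  have hF_pos : 0 < F := hF.lt_of_ne (by rintro rfl; linarith [h r hr, mul_zero r])
  have : 1 / F ≤ sInf S := le_csInf ⟨r, hr⟩ fun r hr => (div_le_iff₀ hF_pos).2 (h r hr)
  exact (div_le_iff₀ hF_pos).1 this

theorem one_le_sq_sum_norm_mul_of_eq_sum {𝕜 E ι : Type*} [RCLike 𝕜] [NormedAddCommGroup E]
    [InnerProductSpace 𝕜 E] [Fintype ι] {ψ : E} (hψ : ‖ψ‖ = 1) (c : ι → 𝕜) (φ : ι → E)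
    (hdec : ψ = ∑ i, c i • φ i) {F : ℝ} (hF : ∀ i, ‖⟪φ i, ψ⟫_𝕜‖ ^ 2 ≤ F) :
    1 ≤ (∑ i, ‖c i‖) ^ 2 * F := by
  have h_one : 1 ≤ (∑ i, ‖c i‖) * √F :=
    calc (1 : ℝ) = ‖⟪ψ, ψ⟫_𝕜‖ := by simp [inner_self_eq_norm_sq_to_K, hψ]
      _ = ‖⟪∑ i, c i • φ i, ψ⟫_𝕜‖ := by rw [← hdec]
      _ = ‖∑ i, starRingEnd 𝕜 (c i) * ⟪φ i, ψ⟫_𝕜‖ := by simp only [sum_inner, inner_smul_left]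
      _ ≤ ∑ i, ‖starRingEnd 𝕜 (c i) * ⟪φ i, ψ⟫_𝕜‖ := norm_sum_le _ _
      _ = ∑ i, ‖c i‖ * ‖⟪φ i, ψ⟫_𝕜‖ := by simp [norm_mul]
      _ ≤ ∑ i, ‖c i‖ * √F := by
        gcongr with i
        exact Real.le_sqrt_of_sq_le (hF i)
      _ = (∑ i, ‖c i‖) * √F := (Finset.sum_mul _ _ _).symm
  have hF_pos : 0 < F :=
    Real.sqrt_pos.1 (pos_of_mul_pos_right (one_pos.trans_le h_one) (by positivity))
  calc 1 ≤ ((∑ i, ‖c i‖) * √F) ^ 2 := one_le_pow₀ h_one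
    _ = (∑ i, ‖c i‖) ^ 2 * F := by rw [mul_pow, Real.sq_sqrt hF_pos.le]

theorem Matrix.permMatrix_mem_unitaryGroup {ι R : Type*} [Fintype ι] [DecidableEq ι]
    [CommRing R] [StarRing R] (σ : Equiv.Perm ι) : σ.permMatrix R ∈ unitaryGroup ι R := by
  rw [mem_unitaryGroup_iff', star_eq_conjTranspose, conjTranspose_permMatrix, ← permMatrix_mul,
    mul_inv_cancel, permMatrix_one]

theorem zmod_two_eq_zero_or_one (a : ZMod 2) : a = 0 ∨ a = 1 := by
  revert a; decide

theorem inv_sqrt_two_sq : (((√2 : ℝ) : ℂ)⁻¹) ^ 2 = 2⁻¹ := by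
  rw [inv_pow, ← Complex.ofReal_pow, Real.sq_sqrt zero_le_two, Complex.ofReal_ofNat]

section Qubits

variable {n : ℕ}

theorem innerC_eq_inner (φ ψ : BV n → ℂ) : innerC φ ψ = ⟪WithLp.toLp 2 φ, WithLp.toLp 2 ψ⟫_ℂ := by
  simp [innerC, EuclideanSpace.inner_toLp_toLp, dotProduct, mul_comm]

theorem isState_iff_norm_toLp (ψ : BV n → ℂ) : IsState ψ ↔ ‖WithLp.toLp 2 ψ‖ = 1 := by
  rw [EuclideanSpace.norm_eq, Real.sqrt_eq_one]
  rfl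

theorem innerC_unitary_mulVec {U : Matrix (BV n) (BV n) ℂ} (hU : U ∈ unitaryGroup (BV n) ℂ)
    (v w : BV n → ℂ) : innerC (U *ᵥ v) (U *ᵥ w) = innerC v w := by
  have h (u u' : BV n → ℂ) : innerC u u' = star u ⬝ᵥ u' := by
    simp [innerC, dotProduct]
  rw [h, h, star_mulVec, dotProduct_mulVec, vecMul_vecMul, ← star_eq_conjTranspose,
    mem_unitaryGroup_iff'.1 hU, vecMul_one]

theorem norm_toLp_unitary_mulVec {U : Matrix (BV n) (BV n) ℂ} (hU : U ∈ unitaryGroup (BV n) ℂ)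
    (v : BV n → ℂ) : ‖WithLp.toLp 2 (U *ᵥ v)‖ = ‖WithLp.toLp 2 v‖ := by
  rw [norm_eq_sqrt_re_inner (𝕜 := ℂ), norm_eq_sqrt_re_inner (𝕜 := ℂ), ← innerC_eq_inner,
    ← innerC_eq_inner, innerC_unitary_mulVec hU]

theorem Sgate_eq_diagonal (j : Fin n) : Sgate j = diagonal fun r => Complex.I ^ (r j).val := rfl

theorem Sgate_mulVec_apply (j : Fin n) (v : BV n → ℂ) (r : BV n) :
    (Sgate j *ᵥ v) r = Complex.I ^ (r j).val * v r := by
  rw [Sgate_eq_diagonal, mulVec_diagonal]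

theorem Sgate_mem_unitaryGroup (j : Fin n) : Sgate j ∈ unitaryGroup (BV n) ℂ := by
  rw [mem_unitaryGroup_iff', Sgate_eq_diagonal, star_eq_conjTranspose, diagonal_conjTranspose,
    diagonal_mul_diagonal, ← diagonal_one]
  congr 1
  funext r
  simp [← mul_pow]

theorem Hgate_apply_update (j : Fin n) (r : BV n) (a : ZMod 2) :
    Hgate j r (Function.update r j a) = ((√2 : ℝ) : ℂ)⁻¹ * (-1) ^ ((r j).val * a.val) := by
  simp +contextual [Hgate, Function.update_of_ne]

theorem Hgate_mulVec_apply (j : Fin n) (v : BV n → ℂ) (r : BV n) :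
    (Hgate j *ᵥ v) r = ((√2 : ℝ) : ℂ)⁻¹ *
      (v (Function.update r j 0) + (-1) ^ (r j).val * v (Function.update r j 1)) := by
  rw [mulVec, dotProduct, Fintype.sum_eq_add (Function.update r j 0) (Function.update r j 1)]
  · simp only [Hgate_apply_update, ZMod.val_zero, ZMod.val_one]
    ring
  · simpa [funext_iff] using ⟨j, by simp⟩
  · rintro c ⟨h0, h1⟩
    suffices Hgate j r c = 0 by rw [this, zero_mul]
    refine if_neg fun hc => ?_
    have : c = Function.update r j (c j) := by
      rw [eq_comm, Function.update_eq_iff]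
      exact ⟨rfl, hc⟩
    rcases zmod_two_eq_zero_or_one (c j) with h | h <;> rw [h] at this
    exacts [h0 this, h1 this]

theorem Hgate_conjTranspose (j : Fin n) : (Hgate j)ᴴ = Hgate j := by
  ext r c
  simp only [conjTranspose_apply, Hgate, of_apply, eq_comm (a := c _), mul_comm (c j).val]
  split_ifs <;> simp [Complex.conj_ofReal]

theorem Hgate_mul_self (j : Fin n) : Hgate j * Hgate j = 1 := by
  refine ext_iff_mulVec.2 fun v => funext fun r => ?_
  rw [← mulVec_mulVec, one_mulVec, Hgate_mulVec_apply, Hgate_mulVec_apply, Hgate_mulVec_apply]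
  simp only [Function.update_idem, Function.update_self, ZMod.val_zero, ZMod.val_one]
  conv_rhs => rw [← Function.update_eq_self j r]
  rcases zmod_two_eq_zero_or_one (r j) with h | h <;>
    simp only [h, ZMod.val_zero, ZMod.val_one, pow_zero, pow_one]
  · linear_combination 2 * v (Function.update r j 0) * inv_sqrt_two_sq
  · linear_combination 2 * v (Function.update r j 1) * inv_sqrt_two_sq

theorem Hgate_mem_unitaryGroup (j : Fin n) : Hgate j ∈ unitaryGroup (BV n) ℂ := by
  rw [mem_unitaryGroup_iff', star_eq_conjTranspose, Hgate_conjTranspose, Hgate_mul_self]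

theorem cnot_involutive {j k : Fin n} (hjk : j ≠ k) :
    Function.Involutive fun c : BV n => Function.update c k (c k + c j) := fun c => by
  simp [Function.update_of_ne hjk, add_assoc, CharTwo.add_self_eq_zero]

theorem CNOTgate_eq_permMatrix {j k : Fin n} (hjk : j ≠ k) :
    CNOTgate j k = (cnot_involutive hjk).toPerm.permMatrix ℂ := by
  ext r c
  simp only [CNOTgate, of_apply, PEquiv.toMatrix_apply, Equiv.toPEquiv_apply, Option.mem_def,
    Option.some_inj, Function.Involutive.coe_toPerm]
  exact (if_congr (cnot_involutive hjk).eq_iff rfl rfl).symm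

theorem CNOTgate_mem_unitaryGroup {j k : Fin n} (hjk : j ≠ k) :
    CNOTgate j k ∈ unitaryGroup (BV n) ℂ := by
  rw [CNOTgate_eq_permMatrix hjk]
  exact permMatrix_mem_unitaryGroup _

theorem cliffordGroup_le_unitaryGroup : CliffordGroup n ≤ unitaryGroup (BV n) ℂ := by
  refine Submonoid.closure_le.2 ?_
  rintro M (⟨j, rfl⟩ | ⟨j, rfl⟩ | ⟨j, k, hjk, rfl⟩)
  exacts [Hgate_mem_unitaryGroup j, Sgate_mem_unitaryGroup j, CNOTgate_mem_unitaryGroup hjk]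

theorem Hgate_mul_Sgate_mul_Sgate_mul_Hgate_mulVec (j : Fin n) (v : BV n → ℂ) :
    (Hgate j * Sgate j * Sgate j * Hgate j) *ᵥ v = fun r => v (r + Pi.single j 1) := by
  funext r
  simp only [← mulVec_mulVec, Hgate_mulVec_apply, Sgate_mulVec_apply, Function.update_idem,
    Function.update_self, ZMod.val_zero, ZMod.val_one]
  have h_add : r + Pi.single j 1 = Function.update r j (r j + 1) := by
    ext i
    rcases eq_or_ne i j with rfl | h <;> simp [*]
  rw [h_add]
  rcases zmod_two_eq_zero_or_one (r j) with h | h <;>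
    simp only [h, ZMod.val_zero, ZMod.val_one, pow_zero, pow_one]
  · rw [zero_add]
    linear_combination (((√2 : ℝ) : ℂ)⁻¹ ^ 2 * (v (Function.update r j 0) -
      v (Function.update r j 1))) * Complex.I_sq + 2 * v (Function.update r j 1) * inv_sqrt_two_sq
  · rw [show (1 + 1 : ZMod 2) = 0 by decide]
    linear_combination -(((√2 : ℝ) : ℂ)⁻¹ ^ 2 * (v (Function.update r j 0) -
      v (Function.update r j 1))) * Complex.I_sq + 2 * v (Function.update r j 0) * inv_sqrt_two_sq

theorem comp_add_single_mem_stabStates {φ : BV n → ℂ} (hφ : φ ∈ stabStates n) (j : Fin n) :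
    (fun r => φ (r + Pi.single j 1)) ∈ stabStates n := by
  obtain ⟨C, hC, rfl⟩ := hφ
  have hH : Hgate j ∈ CliffordGroup n := Submonoid.subset_closure (Or.inl ⟨j, rfl⟩)
  have hS : Sgate j ∈ CliffordGroup n := Submonoid.subset_closure (Or.inr (Or.inl ⟨j, rfl⟩))
  refine ⟨Hgate j * Sgate j * Sgate j * Hgate j * C,
    mul_mem (mul_mem (mul_mem (mul_mem hH hS) hS) hH) hC, ?_⟩
  rw [← mulVec_mulVec, Hgate_mul_Sgate_mul_Sgate_mul_Hgate_mulVec]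

theorem e0_eq_single : (e0 : BV n → ℂ) = Pi.single 0 1 := by
  funext b
  simp [e0, Pi.single_apply]

theorem single_mem_stabStates (b : BV n) : Pi.single b (1 : ℂ) ∈ stabStates n := by
  have h_shift (x : BV n) (j : Fin n) :
      Pi.single (Pi.single j 1 + x) (1 : ℂ) =
        fun r => (Pi.single x 1 : BV n → ℂ) (r + Pi.single j 1) := by
    funext r
    simp only [Pi.single_apply, ← eq_sub_iff_add_eq, sub_eq_add_neg, ← Pi.single_neg,
      ZMod.neg_eq_self_mod_two, add_comm x]
  have h_partial (s : Finset (Fin n)) :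
      Pi.single (∑ i ∈ s, Pi.single i (b i)) (1 : ℂ) ∈ stabStates n := by
    induction s using Finset.induction_on with
    | empty => exact ⟨1, one_mem _, by rw [one_mulVec, e0_eq_single, Finset.sum_empty]⟩
    | insert a s ha ih =>
      rw [Finset.sum_insert ha]
      rcases zmod_two_eq_zero_or_one (b a) with h | h
      · rwa [h, Pi.single_zero, zero_add]
      · rw [h, h_shift]
        exact comp_add_single_mem_stabStates ih a
  simpa [Finset.univ_sum_single] using h_partial Finset.univ

theorem isState_of_mem_stabStates {φ : BV n → ℂ} (hφ : φ ∈ stabStates n) : IsState φ := by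
  obtain ⟨C, hC, rfl⟩ := hφ
  rw [isState_iff_norm_toLp, norm_toLp_unitary_mulVec (cliffordGroup_le_unitaryGroup hC),
    ← isState_iff_norm_toLp]
  simp [IsState, e0, apply_ite]

theorem norm_innerC_le_one {φ ψ : BV n → ℂ} (hφ : IsState φ) (hψ : IsState ψ) :
    ‖innerC φ ψ‖ ≤ 1 := by
  rw [isState_iff_norm_toLp] at hφ hψ
  simpa [innerC_eq_inner, hφ, hψ] using
    norm_inner_le_norm (𝕜 := ℂ) (WithLp.toLp 2 φ) (WithLp.toLp 2 ψ)

theorem norm_innerC_sq_le_stabFidelity {φ ψ : BV n → ℂ} (hψ : IsState ψ)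
    (hφ : φ ∈ stabStates n) : ‖innerC φ ψ‖ ^ 2 ≤ stabFidelity ψ := by
  refine le_csSup ⟨1, ?_⟩ ⟨φ, hφ, rfl⟩
  rintro _ ⟨φ', hφ', rfl⟩
  exact pow_le_one₀ (norm_nonneg _) (norm_innerC_le_one (isState_of_mem_stabStates hφ') hψ)

theorem stabFidelity_nonneg (ψ : BV n → ℂ) : 0 ≤ stabFidelity ψ :=
  Real.sSup_nonneg fun _ ⟨_, _, h⟩ => h ▸ by positivity

theorem exists_eq_sum_smul_stabStates (ψ : BV n → ℂ) :
    ∃ (m : ℕ) (c : Fin m → ℂ) (φ : Fin m → BV n → ℂ),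
      (∀ i, φ i ∈ stabStates n) ∧ ψ = ∑ i, c i • φ i := by
  let e := Fintype.equivFin (BV n)
  refine ⟨_, fun i => ψ (e.symm i), fun i => Pi.single (e.symm i) 1,
    fun i => single_mem_stabStates _, ?_⟩
  rw [Equiv.sum_comp e.symm (fun b => ψ b • Pi.single b 1)]
  exact pi_eq_sum_univ' ψ

end Qubits

/-- For every n-qubit pure state ψ, ξ(ψ) · F_𝒮(ψ) ≥ 1. -/
theorem extent_mul_fidelity_ge_one {n : ℕ} (ψ : BV n → ℂ) (hψ : IsState ψ) :
    1 ≤ stabExtent ψ * stabFidelity ψ := by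
  unfold stabExtent
  refine one_le_csInf_mul ?_ (stabFidelity_nonneg ψ) ?_
  · obtain ⟨m, c, φ, hφ, hdec⟩ := exists_eq_sum_smul_stabStates ψ
    exact ⟨_, m, c, φ, hφ, hdec, rfl⟩
  rintro _ ⟨m, c, φ, hφ, hdec, rfl⟩
  refine one_le_sq_sum_norm_mul_of_eq_sum ((isState_iff_norm_toLp ψ).1 hψ) c
    (fun i => WithLp.toLp 2 (φ i)) ?_ fun i => ?_
  · rw [hdec]
    simp
  · rw [← innerC_eq_inner]
    exact norm_innerC_sq_le_stabFidelity hψ (hφ i)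
end

section
/- Let C be a 2ⁿ×2ⁿ unitary that is a finite product of gates, each of which is either an element of the n-qubit Clifford group 𝒞ₙ or a T-gate T = diag(1, e^{iπ/4}) acting on some single qubit, and suppose exactly t of the factors are T-gates. Then the state ψ = C|0ⁿ⟩ satisfies ξ(ψ) ≤ (1 + 1/√2)^t. -/
open scoped BigOperators
open Finset

/-! A T-gate is `T = ((1 + ω)/2) • 1 + ((1 - ω)/2) • Z` with `ω = e^{iπ/4}` and `Z = S²` Clifford.
Applying it to a combination of stabilizer states with coefficient `ℓ¹`-norm `r` therefore gives
one of `ℓ¹`-norm at most `(|1 + ω| + |1 - ω|)/2 · r = √(1 + 1/√2) · r`, while Clifford gates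
permute stabilizer states and keep the norm. Starting from `|0ⁿ⟩` (norm `1`), the circuit output
has a decomposition of norm at most `√(1 + 1/√2)^t`, and the extent is at most its square. -/

open Matrix

section L1Decomp

variable (𝕜 : Type*) {V W : Type*} [NormedField 𝕜] [AddCommGroup V] [Module 𝕜 V]
  [AddCommGroup W] [Module 𝕜 W]

def HasL1Decomp (A : Set V) (ψ : V) (r : ℝ) : Prop :=
  ∃ (m : ℕ) (c : Fin m → 𝕜) (φ : Fin m → V),
    (∀ i, φ i ∈ A) ∧ ψ = ∑ i, c i • φ i ∧ ∑ i, ‖c i‖ ≤ r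

namespace HasL1Decomp

variable {𝕜} {A : Set V} {ψ ψ' : V} {r r' : ℝ}

theorem of_mem (hψ : ψ ∈ A) : HasL1Decomp 𝕜 A ψ 1 :=
  ⟨1, fun _ => 1, fun _ => ψ, fun _ => hψ, by simp, by simp⟩

theorem add (h : HasL1Decomp 𝕜 A ψ r) (h' : HasL1Decomp 𝕜 A ψ' r') :
    HasL1Decomp 𝕜 A (ψ + ψ') (r + r') := by
  obtain ⟨m, c, φ, hφ, rfl, hc⟩ := h
  obtain ⟨m', c', φ', hφ', rfl, hc'⟩ := h'
  refine ⟨m + m', Fin.append c c', Fin.append φ φ',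
    Fin.addCases (by simpa using hφ) (by simpa using hφ'), by simp [Fin.sum_univ_add], ?_⟩
  simpa [Fin.sum_univ_add] using add_le_add hc hc'

theorem smul (h : HasL1Decomp 𝕜 A ψ r) (a : 𝕜) : HasL1Decomp 𝕜 A (a • ψ) (‖a‖ * r) := by
  obtain ⟨m, c, φ, hφ, rfl, hc⟩ := h
  refine ⟨m, fun i => a * c i, φ, hφ, by simp [Finset.smul_sum, smul_smul], ?_⟩
  simpa [← Finset.mul_sum] using mul_le_mul_of_nonneg_left hc (norm_nonneg a)

theorem map {B : Set W} (f : V →ₗ[𝕜] W) (hf : Set.MapsTo f A B) (h : HasL1Decomp 𝕜 A ψ r) :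
    HasL1Decomp 𝕜 B (f ψ) r := by
  obtain ⟨m, c, φ, hφ, rfl, hc⟩ := h
  exact ⟨m, c, fun i => f (φ i), fun i => hf (hφ i), by simp, hc⟩

theorem smul_add_smul_map (f : V →ₗ[𝕜] V) (hf : Set.MapsTo f A A) (h : HasL1Decomp 𝕜 A ψ r)
    (a b : 𝕜) : HasL1Decomp 𝕜 A (a • ψ + b • f ψ) ((‖a‖ + ‖b‖) * r) := by
  rw [add_mul]
  exact (h.smul a).add ((h.map f hf).smul b)

theorem ofFn_prod_mulVec {ι : Type*} [Fintype ι] [DecidableEq ι] {A : Set (ι → 𝕜)} {ψ : ι → 𝕜}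
    {m : ℕ} (g : Fin m → Matrix ι ι 𝕜) (w : Fin m → ℝ)
    (hg : ∀ i ψ r, HasL1Decomp 𝕜 A ψ r → HasL1Decomp 𝕜 A (g i *ᵥ ψ) (w i * r))
    (h : HasL1Decomp 𝕜 A ψ r) :
    HasL1Decomp 𝕜 A ((List.ofFn g).prod *ᵥ ψ) ((∏ i, w i) * r) := by
  induction m with
  | zero => simpa using h
  | succ m ih =>
    rw [List.ofFn_succ, List.prod_cons, ← mulVec_mulVec, Fin.prod_univ_succ, mul_assoc]
    exact hg 0 _ _ (ih (fun i => g i.succ) (fun i => w i.succ) (fun i => hg i.succ))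

end HasL1Decomp

end L1Decomp

theorem mulVec_mem_stabStates {n : ℕ} {C : Matrix (BV n) (BV n) ℂ} (hC : C ∈ CliffordGroup n)
    {φ : BV n → ℂ} (hφ : φ ∈ stabStates n) : C *ᵥ φ ∈ stabStates n := by
  obtain ⟨D, hD, rfl⟩ := hφ
  exact ⟨C * D, mul_mem hC hD, mulVec_mulVec _ _ _⟩

theorem e0_mem_stabStates {n : ℕ} : (e0 : BV n → ℂ) ∈ stabStates n :=
  ⟨1, one_mem _, (one_mulVec e0).symm⟩

theorem stabExtent_le_sq {n : ℕ} {ψ : BV n → ℂ} {r : ℝ}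
    (h : HasL1Decomp ℂ (stabStates n) ψ r) : stabExtent ψ ≤ r ^ 2 := by
  obtain ⟨m, c, φ, hφ, hψ, hc⟩ := h
  have hnonneg : 0 ≤ ∑ i, ‖c i‖ := Finset.sum_nonneg fun i _ => norm_nonneg (c i)
  calc stabExtent ψ ≤ (∑ i, ‖c i‖) ^ 2 :=
        csInf_le ⟨0, by rintro _ ⟨_, _, _, -, -, rfl⟩; positivity⟩ ⟨m, c, φ, hφ, hψ, rfl⟩
    _ ≤ r ^ 2 := pow_le_pow_left₀ hnonneg hc 2

theorem Sgate_mul_self_mem_cliffordGroup {n : ℕ} (j : Fin n) :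
    Sgate j * Sgate j ∈ CliffordGroup n :=
  have hS : Sgate j ∈ CliffordGroup n := Submonoid.subset_closure (Or.inr (Or.inl ⟨j, rfl⟩))
  mul_mem hS hS

theorem Tgate_eq_smul_one_add_smul_Sgate_sq {n : ℕ} (j : Fin n) :
    Tgate j = ((1 + Complex.exp (Complex.I * Real.pi / 4)) / 2) • (1 : Matrix (BV n) (BV n) ℂ)
      + ((1 - Complex.exp (Complex.I * Real.pi / 4)) / 2) • (Sgate j * Sgate j) := by
  have hdiag {z : ℂ} : (Matrix.of fun r c : BV n => if r = c then z ^ (r j).val else 0)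
      = diagonal fun r => z ^ (r j).val := by
    ext r c; simp [diagonal_apply]
  rw [Tgate, Sgate, hdiag, hdiag, diagonal_mul_diagonal, ← diagonal_one, ← diagonal_smul,
    ← diagonal_smul, diagonal_add]
  congr 1
  ext r
  obtain h | h : (r j).val = 0 ∨ (r j).val = 1 := by have := ZMod.val_lt (r j); omega
  all_goals simp [h]; ring

theorem norm_add_norm_sq_of_norm_eq_one {ω : ℂ} (hω : ‖ω‖ = 1) :
    (‖(1 + ω) / 2‖ + ‖(1 - ω) / 2‖) ^ 2 = 1 + ‖1 - ω ^ 2‖ / 2 := by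
  have hpar : ‖1 + ω‖ ^ 2 + ‖1 - ω‖ ^ 2 = 4 := by
    have := parallelogram_law_with_norm ℝ (1 : ℂ) ω
    simp only [norm_one, hω] at this
    nlinarith
  have hprod : ‖1 + ω‖ * ‖1 - ω‖ = ‖1 - ω ^ 2‖ := by
    rw [← norm_mul]; ring_nf
  simp only [norm_div, Complex.norm_ofNat]
  nlinarith

theorem exp_I_pi_div_four_sq : Complex.exp (Complex.I * Real.pi / 4) ^ 2 = Complex.I := by
  rw [← Complex.exp_nat_mul]
  convert Complex.exp_pi_div_two_mul_I using 2
  push_cast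
  ring

theorem norm_add_norm_T_coeffs :
    ‖(1 + Complex.exp (Complex.I * Real.pi / 4)) / 2‖
      + ‖(1 - Complex.exp (Complex.I * Real.pi / 4)) / 2‖ = √(1 + (√2)⁻¹) := by
  have hω : ‖Complex.exp (Complex.I * Real.pi / 4)‖ = 1 := by simp [Complex.norm_exp]
  have hI : ‖1 - Complex.I‖ = √2 := by norm_num [Complex.norm_def, Complex.normSq_apply]
  rw [← Real.sqrt_sq (add_nonneg (norm_nonneg _) (norm_nonneg _)),
    norm_add_norm_sq_of_norm_eq_one hω, exp_I_pi_div_four_sq, hI, Real.sqrt_div_self', one_div]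

theorem HasL1Decomp.Tgate_mulVec {n : ℕ} {ψ : BV n → ℂ} {r : ℝ}
    (h : HasL1Decomp ℂ (stabStates n) ψ r) (j : Fin n) :
    HasL1Decomp ℂ (stabStates n) (Tgate j *ᵥ ψ) (√(1 + (√2)⁻¹) * r) := by
  rw [← norm_add_norm_T_coeffs, Tgate_eq_smul_one_add_smul_Sgate_sq, add_mulVec, smul_mulVec,
    smul_mulVec, one_mulVec]
  exact h.smul_add_smul_map (Sgate j * Sgate j).mulVecLin
    (fun _ => mulVec_mem_stabStates (Sgate_mul_self_mem_cliffordGroup j)) _ _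

/-- a Clifford+T circuit with exactly `t` T-gate factors prepares a state
of stabilizer extent at most `(1 + 1/√2)^t`. The circuit is a finite (ordered) product
of factors `g 0 * g 1 * ⋯ * g (m-1)`, each factor being either a Clifford unitary or a
T-gate on some qubit; `S` is the set of positions holding T-gates, with `S.card = t`. -/
theorem clifford_T_extent_bound {n : ℕ} (t m : ℕ)
    (g : Fin m → Matrix (BV n) (BV n) ℂ) (S : Finset (Fin m)) (hcard : S.card = t)
    (hT : ∀ i ∈ S, ∃ j, g i = Tgate j)
    (hCliff : ∀ i ∉ S, g i ∈ CliffordGroup n)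
    (C : Matrix (BV n) (BV n) ℂ) (hC : C = (List.ofFn g).prod) :
    stabExtent (C.mulVec e0) ≤ (1 + (Real.sqrt 2)⁻¹) ^ t := by
  have hstep : ∀ i ψ r, HasL1Decomp ℂ (stabStates n) ψ r →
      HasL1Decomp ℂ (stabStates n) (g i *ᵥ ψ) ((if i ∈ S then √(1 + (√2)⁻¹) else 1) * r) := by
    intro i ψ r hψ
    split_ifs with hi
    · obtain ⟨j, hj⟩ := hT i hi
      exact hj ▸ hψ.Tgate_mulVec j
    · simpa using hψ.map (g i).mulVecLin fun _ => mulVec_mem_stabStates (hCliff i hi)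
  have hdecomp := HasL1Decomp.ofFn_prod_mulVec g _ hstep (HasL1Decomp.of_mem e0_mem_stabStates)
  rw [Fintype.prod_ite_mem, Finset.prod_const, hcard, mul_one, ← hC] at hdecomp
  calc stabExtent (C *ᵥ e0) ≤ (√(1 + (√2)⁻¹) ^ t) ^ 2 := stabExtent_le_sq hdecomp
    _ = (1 + (√2)⁻¹) ^ t := by rw [← pow_mul, mul_comm, pow_mul, Real.sq_sqrt (by positivity)]
end

section
/- For every n-qubit pure state ψ, the Fourier coefficients of the characteristic distribution satisfy p̂_ψ(v,w) = 2^{−n} p_ψ(w,v) for all v,w ∈ 𝔽₂ⁿ. -/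
open scoped BigOperators
open Finset

/-! Writing `g_p r = conj (ψ r) * ψ (r + p)`, the Weyl expectation `⟨ψ|W_(p,q)|ψ⟩` is, up to a
phase, the Walsh–Hadamard transform `ĝ_p q`. By the Wiener–Khinchin identity on `𝔽₂ⁿ`, the
transform of `q ↦ |ĝ_p q|²` at `w` is `2ⁿ` times the autocorrelation of `g_p` at `w`, the
four-point sum `∑ r, ψ̄(r) ψ(r+p) ψ(r+w) ψ̄(r+p+w)`, which is symmetric in `p` and `w`. After
swapping `p` and `w`, the sum over `p` undoes the identity and leaves `2ⁿ |⟨ψ|W_(w,v)|ψ⟩|²`. -/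

open ComplexConjugate Matrix

section Signs

variable {n : ℕ}

lemma bdot_comm (p q : BV n) : bdot p q = bdot q p := by
  simp only [bdot, and_comm]

lemma natCast_bdot (p q : BV n) : (bdot p q : ZMod 2) = p ⬝ᵥ q := by
  rw [bdot, Finset.card_filter, Nat.cast_sum, dotProduct]
  refine Finset.sum_congr rfl fun i _ => ?_
  generalize p i = a; generalize q i = b
  fin_cases a <;> fin_cases b <;> rfl

variable {R : Type*} [Ring R]

lemma neg_one_pow_eq_of_natCast_eq {m k : ℕ} (h : (m : ZMod 2) = k) :
    (-1 : R) ^ m = (-1) ^ k := by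
  rw [neg_one_pow_eq_pow_mod_two m, neg_one_pow_eq_pow_mod_two k,
    (ZMod.natCast_eq_natCast_iff' m k 2).1 h]

lemma neg_one_pow_bdot_add_right (q a b : BV n) :
    (-1 : R) ^ bdot q (a + b) = (-1) ^ bdot q a * (-1) ^ bdot q b := by
  rw [← pow_add]
  apply neg_one_pow_eq_of_natCast_eq
  push_cast
  simp only [natCast_bdot, dotProduct_add]

lemma neg_one_pow_bdot_add_left (a b q : BV n) :
    (-1 : R) ^ bdot (a + b) q = (-1) ^ bdot a q * (-1) ^ bdot b q := by
  simp only [bdot_comm _ q, neg_one_pow_bdot_add_right]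

lemma sum_neg_one_pow_bdot [NoZeroDivisors R] [CharZero R] (t : BV n) :
    ∑ q : BV n, (-1 : R) ^ bdot q t = if t = 0 then 2 ^ n else 0 := by
  split_ifs with ht
  · subst ht
    simp [bdot]
  obtain ⟨i, hi⟩ : ∃ i, t i ≠ 0 := by simpa [funext_iff] using ht
  -- translating `q` by the basis vector `eᵢ` flips every sign, so the sum is its own negative
  have hflip : (-1 : R) ^ bdot (Pi.single i 1) t = -1 := by
    rw [neg_one_pow_eq_of_natCast_eq (k := 1) (by
      rw [natCast_bdot, single_dotProduct, one_mul, Nat.cast_one]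
      revert hi; generalize t i = a; revert a; decide), pow_one]
  have hself := Equiv.sum_comp (Equiv.addRight (Pi.single i 1 : BV n)) fun q => (-1 : R) ^ bdot q t
  simp only [Equiv.coe_addRight, neg_one_pow_bdot_add_left, hflip, mul_neg_one,
    Finset.sum_neg_distrib] at hself
  exact CharZero.neg_eq_self_iff.mp hself

end Signs

section Walsh

variable {n : ℕ}

def walshTransform (g : BV n → ℂ) (q : BV n) : ℂ :=
  ∑ r, (-1) ^ bdot q r * g r

def autocorr (g : BV n → ℂ) (p : BV n) : ℂ :=
  ∑ r, g r * conj (g (r + p))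

lemma sum_neg_one_pow_bdot_mul_autocorr (g : BV n → ℂ) (v : BV n) :
    ∑ p, (-1) ^ bdot p v * autocorr g p = (‖walshTransform g v‖ : ℂ) ^ 2 := by
  rw [← Complex.mul_conj', walshTransform, map_sum, Finset.sum_mul_sum]
  simp only [autocorr, Finset.mul_sum]
  rw [Finset.sum_comm]
  refine Finset.sum_congr rfl fun r _ => ?_
  -- substitute `p = r + s`
  rw [← Equiv.sum_comp (Equiv.addLeft r)]
  refine Finset.sum_congr rfl fun s _ => ?_
  simp only [Equiv.coe_addLeft, map_mul, map_pow, map_neg, map_one, bdot_comm _ v,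
    neg_one_pow_bdot_add_right, ← add_assoc, ZModModule.add_self, zero_add]
  ring

lemma sum_norm_sq_walshTransform_mul_neg_one_pow (g : BV n → ℂ) (w : BV n) :
    ∑ q, (‖walshTransform g q‖ : ℂ) ^ 2 * (-1) ^ bdot q w = 2 ^ n * autocorr g w := by
  simp only [← sum_neg_one_pow_bdot_mul_autocorr, Finset.sum_mul]
  rw [Finset.sum_comm]
  have horth : ∀ p, ∑ q : BV n, (-1 : ℂ) ^ bdot p q * (-1) ^ bdot q w =
      if p = w then 2 ^ n else 0 := by
    intro p
    simp only [bdot_comm p, ← neg_one_pow_bdot_add_right, sum_neg_one_pow_bdot,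
      add_eq_zero_iff_eq_neg, ZModModule.neg_eq_self]
  calc ∑ p, ∑ q, (-1) ^ bdot p q * autocorr g p * (-1) ^ bdot q w
      = ∑ p, autocorr g p * ∑ q : BV n, (-1 : ℂ) ^ bdot p q * (-1) ^ bdot q w := by
        refine Finset.sum_congr rfl fun p _ => ?_
        rw [Finset.mul_sum]
        exact Finset.sum_congr rfl fun q _ => by ring
    _ = 2 ^ n * autocorr g w := by simp [horth, mul_comm]

end Walsh

section Weyl

variable {n : ℕ}

def shiftProd (ψ : BV n → ℂ) (p r : BV n) : ℂ :=
  conj (ψ r) * ψ (r + p)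

lemma weyl_mulVec_apply (x : BV n × BV n) (ψ : BV n → ℂ) (r : BV n) :
    (Weyl x *ᵥ ψ) r = Complex.I ^ bdot x.1 x.2 * (-1) ^ bdot x.2 (r + x.1) * ψ (r + x.1) := by
  rw [mulVec, dotProduct, Fintype.sum_eq_single (r + x.1)]
  · simp [Weyl, add_assoc, ZModModule.add_self, mul_assoc]
  · intro c hc
    have : r ≠ c + x.1 := fun h => hc (by rw [h, add_assoc, ZModModule.add_self, add_zero])
    simp [Weyl, this]

lemma weylExp_eq_walshTransform_shiftProd (ψ : BV n → ℂ) (p q : BV n) :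
    weylExp ψ (p, q) =
      Complex.I ^ bdot p q * (-1) ^ bdot q p * walshTransform (shiftProd ψ p) q := by
  simp only [weylExp, walshTransform, shiftProd, Finset.mul_sum, weyl_mulVec_apply,
    neg_one_pow_bdot_add_right]
  exact Finset.sum_congr rfl fun r _ => by ring

lemma norm_weylExp (ψ : BV n → ℂ) (p q : BV n) :
    ‖weylExp ψ (p, q)‖ = ‖walshTransform (shiftProd ψ p) q‖ := by
  simp [weylExp_eq_walshTransform_shiftProd]

lemma autocorr_shiftProd_comm (ψ : BV n → ℂ) (p w : BV n) :
    autocorr (shiftProd ψ p) w = autocorr (shiftProd ψ w) p := by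
  simp only [autocorr, shiftProd, map_mul, Complex.conj_conj, add_right_comm _ p w]
  exact Finset.sum_congr rfl fun r _ => by ring

lemma sum_norm_sq_weylExp_mul_neg_one_pow (ψ : BV n → ℂ) (v w : BV n) :
    ∑ x : BV n × BV n, ‖weylExp ψ x‖ ^ 2 * (-1 : ℝ) ^ (bdot x.1 v + bdot x.2 w)
      = 2 ^ n * ‖weylExp ψ (w, v)‖ ^ 2 := by
  apply Complex.ofReal_injective
  push_cast
  calc ∑ x : BV n × BV n, (‖weylExp ψ x‖ : ℂ) ^ 2 * (-1) ^ (bdot x.1 v + bdot x.2 w)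
      = ∑ p, (-1) ^ bdot p v *
          ∑ q, (‖walshTransform (shiftProd ψ p) q‖ : ℂ) ^ 2 * (-1) ^ bdot q w := by
        simp only [Fintype.sum_prod_type, norm_weylExp, pow_add, Finset.mul_sum]
        exact Finset.sum_congr rfl fun p _ => Finset.sum_congr rfl fun q _ => by ring
    _ = 2 ^ n * ∑ p, (-1) ^ bdot p v * autocorr (shiftProd ψ w) p := by
        simp only [sum_norm_sq_walshTransform_mul_neg_one_pow, autocorr_shiftProd_comm ψ _ w,
          Finset.mul_sum]
        exact Finset.sum_congr rfl fun p _ => by ring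
    _ = 2 ^ n * (‖weylExp ψ (w, v)‖ : ℂ) ^ 2 := by
        rw [sum_neg_one_pow_bdot_mul_autocorr, norm_weylExp]

end Weyl

theorem fourier_of_charDist_general {n : ℕ} (ψ : BV n → ℂ) (v w : BV n) :
    booleanFourier (charDist ψ) (v, w) = (2 ^ n : ℝ)⁻¹ * charDist ψ (w, v) := by
  have h4 : (4 : ℝ) ^ n = 2 ^ n * 2 ^ n := by rw [← mul_pow]; norm_num
  simp only [booleanFourier, charDist, mul_assoc, ← Finset.mul_sum,
    sum_norm_sq_weylExp_mul_neg_one_pow, h4]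
  field_simp

/-- p̂_ψ(v,w) = 2^{−n} p_ψ(w,v). -/
theorem fourier_of_charDist {n : ℕ} (hn : 1 ≤ n) (ψ : BV n → ℂ) (hψ : IsState ψ)
    (v w : BV n) :
    booleanFourier (charDist ψ) (v, w) = (2 ^ n : ℝ)⁻¹ * charDist ψ (w, v) :=
  fourier_of_charDist_general ψ v w
end

section
/- Let m ≥ 1 and let ψ = |T⟩^{⊗m}, an m-qubit state. Then Σ_{x∈𝔽₂^{2m}} p̂_ψ(x)³ = (5/256)^m, and consequently η(ψ) := 2^m Σ_{x∈𝔽₂^{2m}} q_ψ(x) p_ψ(x) = (5/8)^m. -/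
open scoped BigOperators
open Finset

/-!
`|T⟩^{⊗m}` is a product state, so its characteristic distribution and the Fourier transform of
that distribution factor over the qubits. For one qubit the Bloch vector of `|T⟩` is
`(1/√2, 1/√2, 0)`, so `p = (1/2, 0, 1/4, 1/4)` at `(I, Z, X, Y)` and `p̂ = (1/4, 1/8, 0, 1/8)`,
whose cubes sum to `5/256`.

For `η`, expanding `p̂³` and using orthogonality of the characters `(-1)^{x·s}` gives, for any
`f`, `∑ₓ (f ⋆ f)(x) f(x) = 16ⁿ ∑ₛ f̂(s)³`; hence `η = 2^m 16^m (5/256)^m = (5/8)^m`.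
-/

noncomputable section

theorem sum_zmod_two {M : Type*} [AddCommMonoid M] (f : ZMod 2 → M) :
    ∑ a, f a = f 0 + f 1 :=
  Fin.sum_univ_two f

theorem bdot_eq_sum {n : ℕ} (p q : BV n) : bdot p q = ∑ i, (p i).val * (q i).val := by
  rw [bdot, card_filter]
  refine sum_congr rfl fun i _ => ?_
  generalize p i = a; generalize q i = b
  revert a b; decide

theorem sum_prod_coord {n : ℕ} {R : Type*} [CommSemiring R] (F : Fin n → ZMod 2 × ZMod 2 → R) :
    ∑ x : BV n × BV n, ∏ i, F i (x.1 i, x.2 i) = ∏ i, ∑ a, F i a := by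
  rw [Fintype.prod_sum]
  exact Fintype.sum_equiv (Equiv.arrowProdEquivProdArrow _ _ _).symm _ _ fun _ => rfl

theorem BV.neg_eq_self {n : ℕ} (v : BV n) : -v = v :=
  funext fun _ => ZMod.neg_eq_self_mod_two _

def signChar {n : ℕ} (x s : BV n × BV n) : ℝ := (-1) ^ (bdot x.1 s.1 + bdot x.2 s.2)

def qubitSignChar (a s : ZMod 2 × ZMod 2) : ℝ := (-1) ^ (a.1.val * s.1.val + a.2.val * s.2.val)

theorem booleanFourier_eq_sum_signChar {n : ℕ} (f : BV n × BV n → ℝ) (s : BV n × BV n) :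
    booleanFourier f s = (4 ^ n : ℝ)⁻¹ * ∑ x, f x * signChar x s :=
  rfl

theorem signChar_eq_prod {n : ℕ} (x s : BV n × BV n) :
    signChar x s = ∏ i, qubitSignChar (x.1 i, x.2 i) (s.1 i, s.2 i) := by
  rw [signChar, bdot_eq_sum, bdot_eq_sum, ← sum_add_distrib, ← prod_pow_eq_pow_sum]
  rfl

theorem qubitSignChar_add_left (a b s : ZMod 2 × ZMod 2) :
    qubitSignChar (a + b) s = qubitSignChar a s * qubitSignChar b s := by
  rw [qubitSignChar, qubitSignChar, qubitSignChar, ← pow_add, neg_one_pow_eq_pow_mod_two,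
    neg_one_pow_eq_pow_mod_two (_ + _)]
  congr 1
  obtain ⟨a₁, a₂⟩ := a; obtain ⟨b₁, b₂⟩ := b; obtain ⟨s₁, s₂⟩ := s
  revert a₁ a₂ b₁ b₂ s₁ s₂
  decide

theorem signChar_add_left {n : ℕ} (x y s : BV n × BV n) :
    signChar (x + y) s = signChar x s * signChar y s := by
  simp only [signChar_eq_prod, ← prod_mul_distrib, ← qubitSignChar_add_left]
  rfl

theorem sum_qubitSignChar (a : ZMod 2 × ZMod 2) :
    ∑ s, qubitSignChar a s = if a = 0 then 4 else 0 := by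
  have hcases : ∀ c : ZMod 2, c = 0 ∨ c = 1 := by decide
  obtain ⟨a₁, a₂⟩ := a
  rcases hcases a₁ with rfl | rfl <;> rcases hcases a₂ with rfl | rfl <;>
    simp [Fintype.sum_prod_type, sum_zmod_two, qubitSignChar, ZMod.val_one]

theorem sum_signChar {n : ℕ} (x : BV n × BV n) :
    ∑ s, signChar x s = if x = 0 then 4 ^ n else 0 := by
  simp only [signChar_eq_prod, sum_prod_coord, sum_qubitSignChar, Fintype.prod_ite_zero,
    prod_const, card_univ, Fintype.card_fin]
  congr 1
  simp [Prod.ext_iff, funext_iff, forall_and]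

theorem sum_cube_sum_mul_signChar {n : ℕ} (f : BV n × BV n → ℝ) :
    ∑ s, (∑ x, f x * signChar x s) ^ 3 = 4 ^ n * ∑ x, ∑ y, f x * f y * f (x + y) := by
  have hexpand : ∀ s, (∑ x, f x * signChar x s) ^ 3 =
      ∑ x, ∑ y, ∑ z, f x * f y * f z * signChar (x + y + z) s := by
    intro s
    simp only [pow_three, sum_mul, mul_sum, signChar_add_left]
    refine sum_congr rfl fun x _ => sum_congr rfl fun y _ => sum_congr rfl fun z _ => ?_
    ring
  calc ∑ s, (∑ x, f x * signChar x s) ^ 3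
      = ∑ x, ∑ y, ∑ z, f x * f y * f z * ∑ s, signChar (x + y + z) s := by
        simp only [hexpand, mul_sum]
        rw [sum_comm]; refine sum_congr rfl fun x _ => ?_
        rw [sum_comm]; refine sum_congr rfl fun y _ => ?_
        rw [sum_comm]
    _ = 4 ^ n * ∑ x, ∑ y, f x * f y * f (x + y) := by
        have hneg : ∀ v : BV n × BV n, -v = v := fun v =>
          Prod.ext (BV.neg_eq_self _) (BV.neg_eq_self _)
        simp only [sum_signChar, add_eq_zero_iff_eq_neg', hneg, mul_ite, mul_zero,
          sum_ite_eq', mem_univ, if_true, mul_sum]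
        refine sum_congr rfl fun x _ => sum_congr rfl fun y _ => ?_
        ring

theorem sum_convolution_mul_eq_sum_booleanFourier_cube {n : ℕ} (f : BV n × BV n → ℝ) :
    ∑ x, (∑ y, f y * f (x + y)) * f x = 16 ^ n * ∑ s, booleanFourier f s ^ 3 := by
  simp only [booleanFourier_eq_sum_signChar, mul_pow, ← mul_sum, sum_cube_sum_mul_signChar]
  have hscale : (16 : ℝ) ^ n * ((4 ^ n)⁻¹ ^ 3 * 4 ^ n) = 1 := by
    rw [show (16 : ℝ) = 4 * 4 by norm_num, mul_pow]
    field_simp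
  rw [← mul_assoc, ← mul_assoc, mul_assoc _ _ (4 ^ n), hscale, one_mul]
  simp only [sum_mul]
  refine sum_congr rfl fun x _ => sum_congr rfl fun y _ => ?_
  ring

theorem Weyl_mulVec_apply {n : ℕ} (x : BV n × BV n) (ψ : BV n → ℂ) (r : BV n) :
    (Weyl x).mulVec ψ r =
      Complex.I ^ bdot x.1 x.2 * (-1) ^ bdot x.2 (r + x.1) * ψ (r + x.1) := by
  have hsolve : ∀ c : BV n, r = c + x.1 ↔ c = r + x.1 := fun c => by
    rw [← sub_eq_iff_eq_add, eq_comm, sub_eq_add_neg, BV.neg_eq_self]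
  simp only [Matrix.mulVec, dotProduct, Weyl, Matrix.of_apply, hsolve, ite_mul, zero_mul,
    sum_ite_eq', mem_univ, if_true]

def qubitWeylExp (φ : ZMod 2 → ℂ) (a : ZMod 2 × ZMod 2) : ℂ :=
  ∑ c, (starRingEnd ℂ) (φ c) *
    (Complex.I ^ (a.1.val * a.2.val) * (-1) ^ (a.2.val * (c + a.1).val) * φ (c + a.1))

theorem weylExp_prod {n : ℕ} (φ : Fin n → ZMod 2 → ℂ) (x : BV n × BV n) :
    weylExp (fun b => ∏ i, φ i (b i)) x = ∏ i, qubitWeylExp (φ i) (x.1 i, x.2 i) := by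
  rw [weylExp]
  simp only [qubitWeylExp, Fintype.prod_sum]
  refine sum_congr rfl fun r _ => ?_
  rw [Weyl_mulVec_apply, bdot_eq_sum, bdot_eq_sum, ← prod_pow_eq_pow_sum, ← prod_pow_eq_pow_sum,
    map_prod, ← prod_mul_distrib, ← prod_mul_distrib, ← prod_mul_distrib]
  rfl

def qubitCharDist (φ : ZMod 2 → ℂ) (a : ZMod 2 × ZMod 2) : ℝ :=
  2⁻¹ * ‖qubitWeylExp φ a‖ ^ 2

theorem charDist_prod {n : ℕ} (φ : Fin n → ZMod 2 → ℂ) (x : BV n × BV n) :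
    charDist (fun b => ∏ i, φ i (b i)) x = ∏ i, qubitCharDist (φ i) (x.1 i, x.2 i) := by
  rw [charDist, weylExp_prod, norm_prod, ← prod_pow, ← inv_pow, ← Fin.prod_const n (2⁻¹ : ℝ),
    ← prod_mul_distrib]
  rfl

def qubitFourier (g : ZMod 2 × ZMod 2 → ℝ) (t : ZMod 2 × ZMod 2) : ℝ :=
  4⁻¹ * ∑ a, g a * qubitSignChar a t

theorem booleanFourier_prod {n : ℕ} (g : Fin n → ZMod 2 × ZMod 2 → ℝ) (s : BV n × BV n) :
    booleanFourier (fun x => ∏ i, g i (x.1 i, x.2 i)) s =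
      ∏ i, qubitFourier (g i) (s.1 i, s.2 i) := by
  simp only [booleanFourier_eq_sum_signChar, signChar_eq_prod, ← prod_mul_distrib]
  rw [sum_prod_coord fun i a => g i a * qubitSignChar a (s.1 i, s.2 i), ← inv_pow,
    ← Fin.prod_const n (4⁻¹ : ℝ), ← prod_mul_distrib]
  rfl

def tAmp (c : ZMod 2) : ℂ :=
  ((Real.sqrt 2 : ℝ) : ℂ)⁻¹ * Complex.exp (Complex.I * Real.pi / 4) ^ c.val

theorem TstateM_eq_prod (m : ℕ) : TstateM m = fun b => ∏ i, tAmp (b i) :=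
  rfl

theorem tAmp_zero : tAmp 0 = ((Real.sqrt 2 : ℝ) : ℂ)⁻¹ := by
  simp [tAmp]

theorem tAmp_one : tAmp 1 = (1 + Complex.I) / 2 := by
  have hexp : Complex.exp (Complex.I * Real.pi / 4) =
      ((Real.sqrt 2 / 2 : ℝ) : ℂ) * (1 + Complex.I) := by
    rw [show Complex.I * Real.pi / 4 = ((Real.pi / 4 : ℝ) : ℂ) * Complex.I by push_cast; ring,
      Complex.exp_mul_I, ← Complex.ofReal_cos, ← Complex.ofReal_sin, Real.cos_pi_div_four,
      Real.sin_pi_div_four]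
    ring
  rw [tAmp, ZMod.val_one, pow_one, hexp]
  push_cast
  field_simp

theorem sq_ofReal_sqrt_two : ((Real.sqrt 2 : ℝ) : ℂ) ^ 2 = 2 := by
  rw [← Complex.ofReal_pow, Real.sq_sqrt zero_le_two, Complex.ofReal_ofNat]

theorem qubitWeylExp_tAmp_zero_zero : qubitWeylExp tAmp (0, 0) = 1 := by
  simp only [qubitWeylExp, sum_zmod_two, ZMod.val_zero, add_zero, mul_zero, zero_mul, pow_zero,
    one_mul, mul_one, tAmp_zero, tAmp_one, map_inv₀, map_div₀, map_add, map_one, map_ofNat,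
    Complex.conj_ofReal, Complex.conj_I]
  field_simp
  linear_combination (-2 : ℂ) * sq_ofReal_sqrt_two + (-((Real.sqrt 2 : ℝ) : ℂ) ^ 2) * Complex.I_sq

theorem qubitWeylExp_tAmp_zero_one : qubitWeylExp tAmp (0, 1) = 0 := by
  simp only [qubitWeylExp, sum_zmod_two, ZMod.val_zero, ZMod.val_one, add_zero, pow_zero,
    pow_one, one_mul, mul_one, tAmp_zero, tAmp_one, map_inv₀, map_div₀, map_add, map_one,
    map_ofNat, Complex.conj_ofReal, Complex.conj_I]
  field_simp
  linear_combination (-2 : ℂ) * sq_ofReal_sqrt_two + ((Real.sqrt 2 : ℝ) : ℂ) ^ 2 * Complex.I_sq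

theorem qubitWeylExp_tAmp_one_zero : qubitWeylExp tAmp (1, 0) = ((Real.sqrt 2 : ℝ) : ℂ)⁻¹ := by
  simp only [qubitWeylExp, sum_zmod_two, ZMod.val_zero, ZMod.val_one, CharTwo.add_self_eq_zero,
    zero_add, mul_zero, zero_mul, pow_zero, one_mul, mul_one, tAmp_zero, tAmp_one, map_inv₀,
    map_div₀, map_add, map_one, map_ofNat, Complex.conj_ofReal, Complex.conj_I]
  field_simp
  ring

theorem qubitWeylExp_tAmp_one_one : qubitWeylExp tAmp (1, 1) = ((Real.sqrt 2 : ℝ) : ℂ)⁻¹ := by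
  simp only [qubitWeylExp, sum_zmod_two, ZMod.val_zero, ZMod.val_one, CharTwo.add_self_eq_zero,
    zero_add, pow_zero, pow_one, one_mul, mul_one, tAmp_zero, tAmp_one, map_inv₀, map_div₀,
    map_add, map_one, map_ofNat, Complex.conj_ofReal, Complex.conj_I]
  field_simp
  linear_combination (-2 : ℂ) * Complex.I_sq

theorem sum_qubitFourier_qubitCharDist_tAmp_cube :
    ∑ t, qubitFourier (qubitCharDist tAmp) t ^ 3 = 5 / 256 := by
  have hnorm : ‖((Real.sqrt 2 : ℝ) : ℂ)⁻¹‖ ^ 2 = 2⁻¹ := by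
    rw [norm_inv, inv_pow, Complex.norm_real, Real.norm_of_nonneg (Real.sqrt_nonneg 2),
      Real.sq_sqrt zero_le_two]
  simp only [qubitFourier, qubitCharDist, qubitSignChar, Fintype.sum_prod_type, sum_zmod_two,
    qubitWeylExp_tAmp_zero_zero, qubitWeylExp_tAmp_zero_one, qubitWeylExp_tAmp_one_zero,
    qubitWeylExp_tAmp_one_one, norm_one, norm_zero, hnorm, ZMod.val_zero, ZMod.val_one]
  norm_num

end

theorem Tstate_fourier_cubed_and_eta_general (m : ℕ) :
    (∑ x : BV m × BV m, booleanFourier (charDist (TstateM m)) x ^ 3 = (5 / 256 : ℝ) ^ m) ∧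
    ((2 ^ m : ℝ) * ∑ x : BV m × BV m, weylDist (TstateM m) x * charDist (TstateM m) x =
      (5 / 8 : ℝ) ^ m) := by
  have hchar : charDist (TstateM m) = fun x => ∏ i, qubitCharDist tAmp (x.1 i, x.2 i) := by
    rw [TstateM_eq_prod]
    exact funext (charDist_prod fun _ => tAmp)
  have hcube : ∑ x : BV m × BV m, booleanFourier (charDist (TstateM m)) x ^ 3 =
      (5 / 256 : ℝ) ^ m := by
    simp only [hchar, booleanFourier_prod, ← prod_pow]
    rw [sum_prod_coord fun _ t => qubitFourier (qubitCharDist tAmp) t ^ 3,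
      sum_qubitFourier_qubitCharDist_tAmp_cube, Fin.prod_const]
  refine ⟨hcube, ?_⟩
  simp only [weylDist]
  rw [sum_convolution_mul_eq_sum_booleanFourier_cube, hcube, ← mul_assoc, ← mul_pow, ← mul_pow]
  norm_num

/-- for ψ = |T⟩^{⊗m}, Σ_x p̂_ψ(x)³ = (5/256)^m and hence
η(ψ) = 2^m Σ_x q_ψ(x) p_ψ(x) = (5/8)^m. -/
theorem Tstate_fourier_cubed_and_eta (m : ℕ) (hm : 1 ≤ m) :
    (∑ x : BV m × BV m, booleanFourier (charDist (TstateM m)) x ^ 3 = (5 / 256 : ℝ) ^ m) ∧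
    ((2 ^ m : ℝ) * ∑ x : BV m × BV m, weylDist (TstateM m) x * charDist (TstateM m) x =
      (5 / 8 : ℝ) ^ m) :=
  Tstate_fourier_cubed_and_eta_general m
end
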